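/- arXiv:1701.08925 — 5 statements merged into one kernel-verified Lean document; each statement's English description precedes it below -/
import Mathlib

section
/- Let the random matrix A be defined by drawing each entry A_{ij} with (i,j) ∈ S independently from a Borel probability distribution on ℝ having no atoms (a continuous distribution), and setting A_{ij} = 0 for (i,j) ∉ S. Then with probability one, rank(A) = sprank(A^S). -/
open Matrix MeasureTheory

/-- `A` has sparsity pattern `S`: the nonzero entries of `A` are exactly those indexed by `S`. -/
def HasPattern {m n : ℕ} (S : Finset (Fin m × Fin n)) (A : Matrix (Fin m) (Fin n) ℝ) : Prop :=
  ∀ i j, A i j ≠ 0 ↔ (i, j) ∈ S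

/-- Generic rank of the class of matrices with sparsity pattern `S`. -/
noncomputable def sprank {m n : ℕ} (S : Finset (Fin m × Fin n)) : ℕ :=
  sSup {r : ℕ | ∃ A : Matrix (Fin m) (Fin n) ℝ, HasPattern S A ∧ A.rank = r}

/-- The sparsity pattern restricted to the rows in `T` (rows outside `T` become zero). -/
def patternOn {m n : ℕ} (S : Finset (Fin m × Fin n)) (T : Finset (Fin m)) :
    Finset (Fin m × Fin n) :=
  S.filter (fun p => p.1 ∈ T)

/-- A matching of a sparsity pattern: any two distinct pairs differ in both coordinates. -/
def IsMatching {m n : ℕ} (M : Finset (Fin m × Fin n)) : Prop :=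
  ∀ p ∈ M, ∀ q ∈ M, p ≠ q → p.1 ≠ q.1 ∧ p.2 ≠ q.2

/-- `nu S` : maximum cardinality of a matching contained in `S`. -/
noncomputable def nu {m n : ℕ} (S : Finset (Fin m × Fin n)) : ℕ :=
  sSup {k : ℕ | ∃ M ⊆ S, IsMatching M ∧ M.card = k}

/-- ℓ₀ "norm": number of nonzero entries of a vector. -/
noncomputable def l0 {m : ℕ} (y : Fin m → ℝ) : ℕ :=
  (Finset.univ.filter (fun i => y i ≠ 0)).card

/-- `cospark A` : minimum of `‖A x‖₀` over nonzero `x`. -/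
noncomputable def cospark {m n : ℕ} (A : Matrix (Fin m) (Fin n) ℝ) : ℕ :=
  sInf {k : ℕ | ∃ x : Fin n → ℝ, x ≠ 0 ∧ l0 (A.mulVec x) = k}

/-- Generic cospark of the class of matrices with sparsity pattern `S`. -/
noncomputable def spcospark {m n : ℕ} (S : Finset (Fin m × Fin n)) : ℕ :=
  sSup {k : ℕ | ∃ A : Matrix (Fin m) (Fin n) ℝ, HasPattern S A ∧ cospark A = k}

/-- The row-submatrix `A_T`, realized as `A` with the rows outside `T` zeroed out. -/
noncomputable def rowRestrict {m n : ℕ} (A : Matrix (Fin m) (Fin n) ℝ) (T : Finset (Fin m)) :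
    Matrix (Fin m) (Fin n) ℝ :=
  Matrix.of fun i j => if i ∈ T then A i j else 0

/-- `X_W` : the rows of the pattern `S` all of whose nonzero positions lie in the columns `W`. -/
def rowsIn {m n : ℕ} (S : Finset (Fin m × Fin n)) (W : Finset (Fin n)) : Finset (Fin m) :=
  Finset.univ.filter (fun i => ∀ j, (i, j) ∈ S → j ∈ W)

section Aux

/-- Evaluation of a multivariate polynomial is measurable. -/
lemma measurable_mv_eval {ι : Type*} [Fintype ι] (p : MvPolynomial ι ℝ) :
    Measurable fun x : ι → ℝ => MvPolynomial.eval x p := by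
  have : (fun x : ι → ℝ => MvPolynomial.eval x p) =
      fun x => ∑ d ∈ p.support, MvPolynomial.coeff d p * ∏ i ∈ d.support, x i ^ d i := by
    funext x; rw [MvPolynomial.eval_eq]
  rw [this]
  exact Finset.measurable_sum _ fun d _ =>
    (Finset.measurable_prod _ fun i _ => (measurable_pi_apply i).pow_const _).const_mul _

/-- Key lemma over `Fin k`: the zero set of a nonzero polynomial is null, provided
all the coordinate measures are probability measures without atoms. -/
lemma auxFin : ∀ (k : ℕ) (μ : Fin k → Measure ℝ),
    (∀ i, IsProbabilityMeasure (μ i)) → (∀ i, ∀ x : ℝ, μ i {x} = 0) →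
    ∀ p : MvPolynomial (Fin k) ℝ, p ≠ 0 →
    Measure.pi μ {x | MvPolynomial.eval x p = 0} = 0 := by
  intro k
  induction k with
  | zero =>
    intro μ _ _ p hp
    obtain ⟨c, rfl⟩ := MvPolynomial.C_surjective (Fin 0) p
    have hc : c ≠ 0 := fun h => hp (by rw [h, map_zero])
    have : {x : Fin 0 → ℝ | MvPolynomial.eval x (MvPolynomial.C c) = 0} = ∅ := by
      ext x; simp [hc]
    rw [this]; simp
  | succ k ih =>
    intro μ hprob hat p hp
    haveI := hprob
    haveI : ∀ i, NullSingletonClass (μ i) := fun i => ⟨hat i⟩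
    set P := MvPolynomial.finSuccEquiv ℝ k p with hPdef
    have hP : P ≠ 0 := by
      intro h
      exact hp ((map_eq_zero_iff _ (AlgEquiv.injective _)).mp h)
    have hq : P.leadingCoeff ≠ 0 := Polynomial.leadingCoeff_ne_zero.mpr hP
    set ν : Fin k → Measure ℝ := fun j => μ ((0 : Fin (k+1)).succAbove j) with hνdef
    haveI : ∀ j, IsProbabilityMeasure (ν j) := fun j => hprob _
    have hatν : ∀ j, ∀ x : ℝ, ν j {x} = 0 := fun j => hat _
    set W : Set (ℝ × (Fin k → ℝ)) :=
      {ys | MvPolynomial.eval (Fin.cons ys.1 ys.2) p = 0} with hWdef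
    have hWmeas : MeasurableSet W := by
      have hc : Measurable fun ys : ℝ × (Fin k → ℝ) => (Fin.cons ys.1 ys.2 : Fin (k+1) → ℝ) := by
        apply measurable_pi_lambda
        intro i
        refine Fin.cases ?_ ?_ i
        · exact measurable_fst
        · intro j
          exact (measurable_pi_apply j).comp measurable_snd
      exact ((measurable_mv_eval p).comp hc) (measurableSet_singleton 0)
    have hstep : Measure.pi μ {x | MvPolynomial.eval x p = 0} = ((μ 0).prod (Measure.pi ν)) W := by
      have mp := measurePreserving_piFinSuccAbove μ 0
      have hpre : (MeasurableEquiv.piFinSuccAbove (fun _ => ℝ) 0) ⁻¹' W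
          = {x | MvPolynomial.eval x p = 0} := by
        ext x
        simp only [Set.mem_preimage, hWdef, Set.mem_setOf_eq,
          MeasurableEquiv.coe_mk, MeasurableEquiv.piFinSuccAbove_apply, Fin.insertNthEquiv_symm_apply,
          Fin.removeNth_zero, Fin.cons_self_tail]
      rw [← hpre, mp.measure_preimage hWmeas.nullMeasurableSet]
    rw [hstep]
    have hswap : ((μ 0).prod (Measure.pi ν)) W
        = ((Measure.pi ν).prod (μ 0)) (Prod.swap ⁻¹' W) := by
      rw [← Measure.prod_swap, Measure.map_apply measurable_swap hWmeas]
    rw [hswap]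
    have hW'meas : MeasurableSet (Prod.swap ⁻¹' W) := measurable_swap hWmeas
    rw [Measure.measure_prod_null hW'meas]
    have hqnull : Measure.pi ν {s | MvPolynomial.eval s P.leadingCoeff = 0} = 0 :=
      ih ν (fun j => hprob _) hatν P.leadingCoeff hq
    have hae : ∀ᵐ s ∂Measure.pi ν, MvPolynomial.eval s P.leadingCoeff ≠ 0 := by
      rw [ae_iff]
      convert hqnull using 2
      ext s; simp
    refine Filter.Eventually.mono hae ?_
    intro s hs
    have hg : Polynomial.map (MvPolynomial.eval s) P ≠ 0 := by
      intro h
      have h2 := congrArg (fun r => Polynomial.coeff r P.natDegree) h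
      simp only [Polynomial.coeff_map, Polynomial.coeff_zero] at h2
      exact hs h2
    have hslice : (Prod.mk s ⁻¹' (Prod.swap ⁻¹' W))
        = {y | (Polynomial.map (MvPolynomial.eval s) P).IsRoot y} := by
      ext y
      simp only [Set.mem_preimage, Prod.swap_prod_mk, hWdef, Set.mem_setOf_eq, Polynomial.IsRoot]
      rw [MvPolynomial.eval_eq_eval_mv_eval']
    show (μ 0) (Prod.mk s ⁻¹' (Prod.swap ⁻¹' W)) = 0
    rw [hslice]
    exact Set.Countable.measure_zero (Polynomial.finite_setOf_isRoot hg).countable _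

/-- The zero set of a nonzero multivariate polynomial is null for any product of
atomless probability measures. -/
lemma mv_null {ι : Type*} [Fintype ι] (μ : ι → Measure ℝ)
    (hprob : ∀ i, IsProbabilityMeasure (μ i)) (hat : ∀ i, ∀ x : ℝ, μ i {x} = 0)
    (p : MvPolynomial ι ℝ) (hp : p ≠ 0) :
    Measure.pi μ {x | MvPolynomial.eval x p = 0} = 0 := by
  haveI := hprob
  set e : Fin (Fintype.card ι) ≃ ι := (Fintype.equivFin ι).symm with hedef
  have mp := measurePreserving_piCongrLeft (α := fun _ : ι => ℝ) (μ := μ) e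
  have hZmeas : MeasurableSet {x : ι → ℝ | MvPolynomial.eval x p = 0} :=
    (measurable_mv_eval p) (measurableSet_singleton 0)
  rw [← mp.measure_preimage hZmeas.nullMeasurableSet]
  have hpre : (MeasurableEquiv.piCongrLeft (fun _ : ι => ℝ) e) ⁻¹'
      {x : ι → ℝ | MvPolynomial.eval x p = 0}
      = {y : Fin (Fintype.card ι) → ℝ |
          MvPolynomial.eval y (MvPolynomial.rename e.symm p) = 0} := by
    ext y
    simp only [Set.mem_preimage, Set.mem_setOf_eq, MvPolynomial.eval_rename]
    have hco : (MeasurableEquiv.piCongrLeft (fun _ : ι => ℝ) e) y = y ∘ e.symm := by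
      funext i
      show (Equiv.piCongrLeft (fun _ : ι => ℝ) e) y i = y (e.symm i)
      conv_lhs => rw [show i = e (e.symm i) by rw [e.apply_symm_apply]]
      rw [Equiv.piCongrLeft_apply_apply]
    rw [hco]
  rw [hpre]
  refine auxFin _ (fun i => μ (e i)) (fun i => hprob _) (fun i => hat _) _ ?_
  intro h
  have h2 : (MvPolynomial.renameEquiv ℝ e.symm) p = 0 := by
    simpa [MvPolynomial.renameEquiv_apply] using h
  exact hp ((map_eq_zero_iff _ (AlgEquiv.injective _)).mp h2)

/-- Any matrix has linearly independent columns selected by some map defined on `Fin rank`. -/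
lemma exists_cols_li {a b : ℕ} (M : Matrix (Fin a) (Fin b) ℝ) :
    ∃ g : Fin M.rank → Fin b, LinearIndependent ℝ (fun k => Mᵀ (g k)) := by
  obtain ⟨t, hts, hspan, hli⟩ := exists_linearIndependent ℝ (Set.range Mᵀ)
  have htfin : t.Finite := (Set.finite_range Mᵀ).subset hts
  haveI : Fintype t := htfin.fintype
  have hcard : Fintype.card t = M.rank := by
    rw [M.rank_eq_finrank_span_cols]
    change _ = Module.finrank ℝ (Submodule.span ℝ (Set.range Mᵀ))
    rw [← hspan, finrank_span_set_eq_card hli, Set.toFinset_card]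
  let e : Fin M.rank ≃ t := (Fintype.equivFinOfCardEq hcard).symm
  choose g hg using fun k : Fin M.rank => hts (e k).2
  refine ⟨g, ?_⟩
  have h2 : (fun k => Mᵀ (g k)) = (Subtype.val ∘ e) := by funext k; rw [hg]; rfl
  rw [h2]
  exact hli.comp e e.injective

/-- A matrix of rank `r` has an `r × r` submatrix with nonzero determinant. -/
lemma exists_submatrix_det_ne_zero {a b : ℕ} (A : Matrix (Fin a) (Fin b) ℝ) :
    ∃ (f : Fin A.rank → Fin a) (g : Fin A.rank → Fin b),
      (A.submatrix f g).det ≠ 0 := by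
  obtain ⟨g, hg⟩ := exists_cols_li A
  set B : Matrix (Fin a) (Fin A.rank) ℝ := A.submatrix id g with hBdef
  have hBt : Bᵀ = fun k => Aᵀ (g k) := by
    funext k i; rfl
  have hBrank : B.rank = A.rank := by
    rw [← B.rank_transpose, hBt]
    have := hg.rank_matrix
    rwa [Fintype.card_fin] at this
  obtain ⟨f0, hf0⟩ := exists_cols_li Bᵀ
  have hf : LinearIndependent ℝ (fun k : Fin Bᵀ.rank => B (f0 k)) := by
    have : (fun k : Fin Bᵀ.rank => Bᵀᵀ (f0 k)) = fun k => B (f0 k) := by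
      funext k; rw [Matrix.transpose_transpose]
    rwa [this] at hf0
  have hBtr : Bᵀ.rank = A.rank := by rw [B.rank_transpose, hBrank]
  refine ⟨fun k => f0 (Fin.cast hBtr.symm k), g, ?_⟩
  have hli : LinearIndependent ℝ
      (fun k : Fin A.rank => B (f0 (Fin.cast hBtr.symm k))) :=
    hf.comp _ (Fin.cast_injective _)
  have hsub : (fun k : Fin A.rank =>
      (A.submatrix (fun k => f0 (Fin.cast hBtr.symm k)) g) k)
      = fun k => B (f0 (Fin.cast hBtr.symm k)) := by
    funext k; funext l; rfl
  have hunit : IsUnit (A.submatrix (fun k => f0 (Fin.cast hBtr.symm k)) g) := by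
    rw [← Matrix.linearIndependent_rows_iff_isUnit]
    change LinearIndependent ℝ (fun k : Fin A.rank =>
      (A.submatrix (fun k => f0 (Fin.cast hBtr.symm k)) g) k)
    rw [hsub]
    exact hli
  exact ((Matrix.isUnit_iff_isUnit_det _).mp hunit).ne_zero

set_option maxHeartbeats 1000000 in
/-- Pushforward of the nested product measure under restriction to the coordinates in `S`. -/
lemma map_restrict {m n : ℕ} (S : Finset (Fin m × Fin n)) (μ : Fin m → Fin n → Measure ℝ)
    [∀ i j, IsProbabilityMeasure (μ i j)] :
    (Measure.pi fun i => Measure.pi fun j => μ i j).map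
        (fun ω (v : {x // x ∈ S}) => ω v.1.1 v.1.2)
      = Measure.pi (fun v : {x // x ∈ S} => μ v.1.1 v.1.2) := by
  have hmeas : Measurable (fun (ω : Fin m → Fin n → ℝ) (v : {x // x ∈ S}) => ω v.1.1 v.1.2) :=
    measurable_pi_lambda _ fun v => (measurable_pi_apply v.1.2).comp (measurable_pi_apply v.1.1)
  haveI : ∀ v : {x // x ∈ S}, SigmaFinite (μ v.1.1 v.1.2) := fun v => inferInstance
  refine (Measure.pi_eq fun s hs => ?_).symm
  rw [Measure.map_apply hmeas (MeasurableSet.univ_pi hs)]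
  have hpre : (fun (ω : Fin m → Fin n → ℝ) (v : {x // x ∈ S}) => ω v.1.1 v.1.2) ⁻¹'
        (Set.pi Set.univ s)
      = Set.pi Set.univ (fun i => Set.pi Set.univ
          (fun j => if h : (i, j) ∈ S then s ⟨(i, j), h⟩ else Set.univ)) := by
    ext ω
    simp only [Set.mem_preimage, Set.mem_pi, Set.mem_univ, true_implies]
    constructor
    · intro h i j
      by_cases hij : (i, j) ∈ S
      · simpa [hij] using h ⟨(i, j), hij⟩
      · simp [hij]
    · intro h v
      have h2 := h v.1.1 v.1.2
      rw [dif_pos (show (v.1.1, v.1.2) ∈ S by rw [Prod.mk.eta]; exact v.2)] at h2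
      convert h2 using 2
  rw [hpre, Measure.pi_pi]
  have hfac : ∀ i, (Measure.pi fun j => μ i j) (Set.pi Set.univ
      (fun j => if h : (i, j) ∈ S then s ⟨(i, j), h⟩ else Set.univ))
      = ∏ j, (if h : (i, j) ∈ S then μ i j (s ⟨(i, j), h⟩) else 1) := by
    intro i
    rw [Measure.pi_pi]
    refine Finset.prod_congr rfl fun j _ => ?_
    split_ifs with hij
    · rfl
    · exact measure_univ
  set F : Fin m × Fin n → ENNReal :=
    fun q => if h : q ∈ S then μ q.1 q.2 (s ⟨q, h⟩) else 1 with hFdef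
  calc ∏ i, (Measure.pi fun j => μ i j) (Set.pi Set.univ
      (fun j => if h : (i, j) ∈ S then s ⟨(i, j), h⟩ else Set.univ))
      = ∏ i, ∏ j, F (i, j) := Finset.prod_congr rfl fun i _ => hfac i
    _ = ∏ q : Fin m × Fin n, F q := (Fintype.prod_prod_type F).symm
    _ = ∏ q ∈ S, F q :=
        (Finset.prod_subset S.subset_univ (fun q _ hq => dif_neg hq)).symm
    _ = ∏ v ∈ S.attach, F (v : Fin m × Fin n) := (Finset.prod_attach S F).symm
    _ = ∏ v : {x // x ∈ S}, μ v.1.1 v.1.2 (s v) := by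
        rw [← Finset.univ_eq_attach]
        refine Finset.prod_congr rfl fun v _ => ?_
        rw [hFdef]
        dsimp only
        rw [dif_pos v.2]

end Aux

/-- drawing the entries indexed by `S` independently from atomless Borel
probability distributions on ℝ (and setting entries outside `S` to zero), with probability
one the resulting matrix has rank equal to the generic rank `sprank S`. -/
theorem stmt0 {m n : ℕ} (hn : 1 ≤ n) (hmn : n < m) (S : Finset (Fin m × Fin n))
    (μ : Fin m → Fin n → Measure ℝ) [∀ i j, IsProbabilityMeasure (μ i j)]
    (hatoms : ∀ i j, (i, j) ∈ S → ∀ x : ℝ, μ i j {x} = 0) :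
    (Measure.pi fun i => Measure.pi fun j => μ i j)
      {ω : Fin m → Fin n → ℝ |
        (Matrix.of fun i j => if (i, j) ∈ S then ω i j else 0).rank = sprank S} = 1 := by
  set PP : Measure (Fin m → Fin n → ℝ) := Measure.pi fun i => Measure.pi fun j => μ i j with hPPdef
  set Mk : (Fin m → Fin n → ℝ) → Matrix (Fin m) (Fin n) ℝ :=
    fun ω => Matrix.of fun i j => if (i, j) ∈ S then ω i j else 0 with hMkdef
  -- basic facts about `sprank`
  have hBdd : BddAbove {r : ℕ | ∃ A : Matrix (Fin m) (Fin n) ℝ, HasPattern S A ∧ A.rank = r} := by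
    refine ⟨n, ?_⟩
    rintro r ⟨A, -, rfl⟩
    exact A.rank_le_width
  have hNe : {r : ℕ | ∃ A : Matrix (Fin m) (Fin n) ℝ, HasPattern S A ∧ A.rank = r}.Nonempty := by
    refine ⟨_, (Matrix.of fun i j => if (i, j) ∈ S then (1 : ℝ) else 0), ?_, rfl⟩
    intro i j
    by_cases hij : (i, j) ∈ S <;> simp [hij]
  have hmem := Nat.sSup_mem hNe hBdd
  obtain ⟨A₀, hA₀pat, hA₀rank⟩ := hmem
  have hub : ∀ A : Matrix (Fin m) (Fin n) ℝ, HasPattern S A → A.rank ≤ sprank S :=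
    fun A hA => le_csSup hBdd ⟨A, hA, rfl⟩
  -- the witness minor of `A₀`
  obtain ⟨f, g, hdet⟩ := exists_submatrix_det_ne_zero A₀
  -- the determinant polynomial of the corresponding patterned minor
  set N : Matrix (Fin A₀.rank) (Fin A₀.rank) (MvPolynomial {x // x ∈ S} ℝ) :=
    Matrix.of (fun a b => if h : (f a, g b) ∈ S then MvPolynomial.X ⟨(f a, g b), h⟩ else 0)
    with hNdef
  set p : MvPolynomial {x // x ∈ S} ℝ := N.det with hpdef
  have heval : ∀ x : {x // x ∈ S} → ℝ, MvPolynomial.eval x p =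
      ((Matrix.of fun i j => if h : (i, j) ∈ S then x ⟨(i, j), h⟩ else (0:ℝ)).submatrix f g).det := by
    intro x
    rw [hpdef, RingHom.map_det]
    congr 1
    ext a b
    simp only [RingHom.mapMatrix_apply, Matrix.map_apply, Matrix.submatrix_apply, hNdef,
      Matrix.of_apply]
    split_ifs with h
    · rw [MvPolynomial.eval_X]
    · rw [map_zero]
  have hp0 : p ≠ 0 := by
    intro h
    apply hdet
    have h2 := heval (fun v => A₀ v.1.1 v.1.2)
    rw [h, map_zero] at h2
    have hmask : (Matrix.of fun i j =>
        if h : (i, j) ∈ S then A₀ (i, j).1 (i, j).2 else (0:ℝ)) = A₀ := by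
      ext i j
      simp only [Matrix.of_apply]
      split_ifs with hij
      · rfl
      · exact (not_not.mp fun hne => hij ((hA₀pat i j).mp hne)).symm
    rw [hmask] at h2
    exact h2.symm
  -- measurability of the zero set of `p`
  have hZmeas : MeasurableSet {x : {x // x ∈ S} → ℝ | MvPolynomial.eval x p = 0} :=
    (measurable_mv_eval p) (measurableSet_singleton 0)
  have hρmeas : Measurable (fun (ω : Fin m → Fin n → ℝ) (v : {x // x ∈ S}) => ω v.1.1 v.1.2) :=
    measurable_pi_lambda _ fun v => (measurable_pi_apply v.1.2).comp (measurable_pi_apply v.1.1)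
  -- the two bad sets are null
  set B1 : Set (Fin m → Fin n → ℝ) := ⋃ v ∈ S, {ω : Fin m → Fin n → ℝ | ω v.1 v.2 = 0}
    with hB1def
  have hB1null : PP B1 = 0 := by
    refine (measure_biUnion_null_iff S.countable_toSet).mpr fun v hv => ?_
    have h1 : (Measure.pi fun j => μ v.1 j) (Function.eval v.2 ⁻¹' {0}) = 0 :=
      Measure.pi_eval_preimage_null _ (hatoms v.1 v.2 (by rwa [Prod.mk.eta]) 0)
    have h2 : {ω : Fin m → Fin n → ℝ | ω v.1 v.2 = 0}
        = Function.eval v.1 ⁻¹' (Function.eval v.2 ⁻¹' {0}) := rfl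
    rw [h2]
    exact Measure.pi_eval_preimage_null _ h1
  set B2 : Set (Fin m → Fin n → ℝ) :=
    (fun (ω : Fin m → Fin n → ℝ) (v : {x // x ∈ S}) => ω v.1.1 v.1.2) ⁻¹'
      {x : {x // x ∈ S} → ℝ | MvPolynomial.eval x p = 0} with hB2def
  have hB2null : PP B2 = 0 := by
    rw [hB2def, hPPdef, ← Measure.map_apply hρmeas hZmeas, map_restrict S μ]
    exact mv_null _ (fun v => inferInstance)
      (fun v x => hatoms v.1.1 v.1.2 (by rw [Prod.mk.eta]; exact v.2) x) p hp0
  -- pointwise: outside the bad sets, the rank equals `sprank S`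
  have hgood : ∀ ω, ω ∉ B1 → ω ∉ B2 → (Mk ω).rank = sprank S := by
    intro ω h1 h2
    have hpat : HasPattern S (Mk ω) := by
      intro i j
      constructor
      · intro hne
        by_contra hij
        exact hne (by simp [hMkdef, hij])
      · intro hij hzero
        apply h1
        rw [hB1def]
        refine Set.mem_biUnion hij ?_
        show ω (i, j).1 (i, j).2 = 0
        simpa [hMkdef, hij] using hzero
    refine le_antisymm (hub _ hpat) ?_
    rw [← show A₀.rank = sprank S from hA₀rank]
    -- the minor of `Mk ω` is invertible
    have hd : ((Mk ω).submatrix f g).det ≠ 0 := by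
      have h3 := heval (fun v => ω v.1.1 v.1.2)
      have h4 : (Matrix.of fun i j =>
          if h : (i, j) ∈ S then ω (i, j).1 (i, j).2 else (0:ℝ)) = Mk ω := by
        ext i j
        simp only [Matrix.of_apply, hMkdef]
        split_ifs <;> rfl
      rw [h4] at h3
      intro hcon
      apply h2
      show MvPolynomial.eval (fun v => ω v.1.1 v.1.2) p = 0
      rw [h3]; exact hcon
    have hunit : IsUnit ((Mk ω).submatrix f g) :=
      (Matrix.isUnit_iff_isUnit_det _).mpr (isUnit_iff_ne_zero.mpr hd)
    have hli : LinearIndependent ℝ (fun a => ((Mk ω).submatrix f g) a) :=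
      Matrix.linearIndependent_rows_iff_isUnit.mpr hunit
    have hli2 : LinearIndependent ℝ (fun a => (Mk ω) (f a)) := by
      apply LinearIndependent.of_comp (LinearMap.funLeft ℝ ℝ g)
      have : (⇑(LinearMap.funLeft ℝ ℝ g) ∘ fun a => (Mk ω) (f a))
          = fun a => ((Mk ω).submatrix f g) a := by
        funext a; funext b; rfl
      rw [this]
      exact hli
    -- hence `Mk ω` has at least `A₀.rank` independent rows
    have hspan : Module.finrank ℝ (Submodule.span ℝ (Set.range fun a => (Mk ω) (f a)))
        = A₀.rank := by
      rw [finrank_span_eq_card hli2, Fintype.card_fin]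
    have hmono : Submodule.span ℝ (Set.range fun a => (Mk ω) (f a))
        ≤ Submodule.span ℝ (Set.range (Mk ω)) :=
      Submodule.span_mono (Set.range_comp_subset_range f (Mk ω))
    have := Submodule.finrank_mono hmono
    rw [hspan] at this; rw [Matrix.rank_eq_finrank_span_row (Mk ω)]
    exact this
  -- conclude
  have hsub : {ω : Fin m → Fin n → ℝ | (Mk ω).rank = sprank S}ᶜ ⊆ B1 ∪ B2 := by
    intro ω hω
    by_contra hcon
    rw [Set.mem_union] at hcon
    push_neg at hcon
    exact hω (hgood ω hcon.1 hcon.2)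
  have hcompl : PP {ω : Fin m → Fin n → ℝ | (Mk ω).rank = sprank S}ᶜ = 0 :=
    measure_mono_null hsub (measure_union_null hB1null hB2null)
  haveI : IsProbabilityMeasure PP := by
    rw [hPPdef];
    infer_instance
  calc PP {ω : Fin m → Fin n → ℝ | (Mk ω).rank = sprank S}
      = PP Set.univ := measure_congr (MeasureTheory.ae_eq_univ.mpr hcompl)
    _ = 1 := measure_univ
end

section
/- For any sparsity pattern S, the generic rank sprank(A^S) equals ν(S), the maximum cardinality of a matching of S (i.e., the maximum bipartite matching of the bipartite graph whose edges are the pairs in S). -/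
open Matrix MeasureTheory

/-!
A matrix of rank `r` has a nonsingular `r × r` submatrix; some term of the Leibniz expansion of
its determinant is nonzero, and the positions of that term form a matching of size `r` inside
the pattern. Conversely, given a matching `M ⊆ S`, put a large weight on the entries of `M` and
`1` on the rest of `S`: the `M × M` submatrix is then strictly diagonally dominant, hence
nonsingular, so the rank is at least `|M|`.
-/

namespace Matrix

variable {k m n R K : Type*}

theorem injective_of_det_submatrix_ne_zero [Fintype k] [DecidableEq k] [CommRing R]
    {A : Matrix m n R} {r : k → m} {c : k → n} (h : (A.submatrix r c).det ≠ 0) :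
    Function.Injective r ∧ Function.Injective c := by
  refine ⟨fun i j hij => ?_, fun i j hij => ?_⟩ <;> by_contra hne
  · exact h (det_zero_of_row_eq hne (by ext l; simp [hij]))
  · exact h (det_zero_of_column_eq hne (by simp [hij]))

theorem exists_perm_forall_ne_zero_of_det_ne_zero [Fintype k] [DecidableEq k] [CommRing R]
    {B : Matrix k k R} (h : B.det ≠ 0) : ∃ σ : Equiv.Perm k, ∀ i, B (σ i) i ≠ 0 := by
  contrapose! h
  rw [det_apply]
  refine Finset.sum_eq_zero fun σ _ => ?_
  obtain ⟨i, hi⟩ := h σ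
  rw [Finset.prod_eq_zero (f := fun j => B (σ j) j) (Finset.mem_univ i) hi, smul_zero]

theorem exists_linearIndependent_cols_of_le_rank [Fintype m] [Fintype n] [Field K]
    (A : Matrix m n K) {r : ℕ} (hr : r ≤ A.rank) :
    ∃ c : Fin r → n, LinearIndependent K (A.col ∘ c) := by
  obtain ⟨κ, a, ha, hspan, hli⟩ := exists_linearIndependent' K A.col
  have : Fintype κ := Fintype.ofInjective a ha
  have hcard : A.rank = Fintype.card κ := by
    rw [rank_eq_finrank_span_cols, ← hspan, finrank_span_eq_card hli]
  obtain ⟨e⟩ : Nonempty (Fin r ↪ κ) :=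
    Function.Embedding.nonempty_of_card_le (by simpa [← hcard] using hr)
  exact ⟨a ∘ e, hli.comp e e.injective⟩

theorem exists_det_submatrix_ne_zero [Fintype m] [Fintype n] [Field K] (A : Matrix m n K) :
    ∃ (r : Fin A.rank → m) (c : Fin A.rank → n), (A.submatrix r c).det ≠ 0 := by
  obtain ⟨c, hc⟩ := A.exists_linearIndependent_cols_of_le_rank le_rfl
  have hB : (A.submatrix id c)ᵀ.rank = A.rank := by
    rw [rank_transpose, rank_eq_finrank_span_cols]
    exact (finrank_span_eq_card hc).trans (Fintype.card_fin _)
  obtain ⟨r, hr⟩ := (A.submatrix id c)ᵀ.exists_linearIndependent_cols_of_le_rank hB.ge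
  refine ⟨r, c, ?_⟩
  rw [← isUnit_iff_ne_zero, ← isUnit_iff_isUnit_det, ← linearIndependent_rows_iff_isUnit]
  exact hr

theorem card_le_rank_of_det_submatrix_ne_zero [Fintype k] [DecidableEq k] [Fintype n] [Field K]
    {A : Matrix m n K} {r : k → m} {c : k → n} (h : (A.submatrix r c).det ≠ 0) :
    Fintype.card k ≤ A.rank := by
  calc Fintype.card k = (A.submatrix r c).rank :=
        (rank_of_isUnit _ ((isUnit_iff_isUnit_det _).mpr (isUnit_iff_ne_zero.mpr h))).symm
    _ ≤ A.rank := rank_submatrix_le A r c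

end Matrix

section Pattern

variable {m n : ℕ}

theorem IsMatching.eq_of_mem {M : Finset (Fin m × Fin n)} (hM : IsMatching M)
    {p q : Fin m × Fin n} (hp : p ∈ M) (hq : q ∈ M) (hpq : (p.1, q.2) ∈ M) : p = q := by
  by_contra hne
  have hp' : (p.1, q.2) = p := by_contra fun h => (hM _ hpq _ hp h).1 rfl
  exact (hM _ hp _ hq hne).2 (congrArg Prod.snd hp').symm

theorem isMatching_image_of_injective {k : ℕ} {r : Fin k → Fin m} {c : Fin k → Fin n}
    (hr : Function.Injective r) (hc : Function.Injective c) :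
    IsMatching (Finset.univ.image fun i => (r i, c i)) := by
  simp only [IsMatching, Finset.mem_image, Finset.mem_univ, true_and]
  rintro _ ⟨i, rfl⟩ _ ⟨j, rfl⟩ hij
  have hne : i ≠ j := fun h => hij (h ▸ rfl)
  exact ⟨hr.ne hne, hc.ne hne⟩

theorem rank_le_nu {S : Finset (Fin m × Fin n)} {A : Matrix (Fin m) (Fin n) ℝ}
    (hA : HasPattern S A) : A.rank ≤ nu S := by
  obtain ⟨r, c, hdet⟩ := A.exists_det_submatrix_ne_zero
  obtain ⟨σ, hσ⟩ := Matrix.exists_perm_forall_ne_zero_of_det_ne_zero hdet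
  obtain ⟨hr, hc⟩ := Matrix.injective_of_det_submatrix_ne_zero hdet
  refine le_csSup ⟨S.card, ?_⟩
    ⟨_, ?_, isMatching_image_of_injective (hr.comp σ.injective) hc, ?_⟩
  · rintro _ ⟨M, hMS, -, rfl⟩
    exact Finset.card_le_card hMS
  · exact Finset.image_subset_iff.mpr fun i _ => (hA _ _).mp (hσ i)
  · rw [Finset.card_image_of_injective _ fun i j h => hc (congrArg Prod.snd h)]
    simp

def patternMatrix (S M : Finset (Fin m × Fin n)) (t : ℝ) : Matrix (Fin m) (Fin n) ℝ :=
  Matrix.of fun i j => if (i, j) ∈ M then t else if (i, j) ∈ S then 1 else 0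

theorem hasPattern_patternMatrix {S M : Finset (Fin m × Fin n)} (hMS : M ⊆ S) {t : ℝ}
    (ht : t ≠ 0) : HasPattern S (patternMatrix S M t) := by
  intro i j
  by_cases hM : (i, j) ∈ M
  · simp [patternMatrix, hM, hMS hM, ht]
  · by_cases hS : (i, j) ∈ S <;> simp [patternMatrix, hM, hS]

/-- The weight `|M| + 1` makes the `M × M` submatrix strictly diagonally dominant, since its
off-diagonal entries lie off `M` (`IsMatching.eq_of_mem`) and are therefore `0` or `1`. -/
theorem card_le_rank_patternMatrix {S M : Finset (Fin m × Fin n)} (hM : IsMatching M) :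
    M.card ≤ (patternMatrix S M (M.card + 1)).rank := by
  set C := (patternMatrix S M (M.card + 1)).submatrix (fun p : M => p.1.1) (fun p : M => p.1.2)
  have hoff : ∀ p q : M, p ≠ q → ‖C p q‖ ≤ 1 := by
    intro p q hpq
    have : (p.1.1, q.1.2) ∉ M := fun h => hpq (Subtype.ext (hM.eq_of_mem p.2 q.2 h))
    simp only [C, patternMatrix, Matrix.submatrix_apply, Matrix.of_apply, if_neg this]
    split_ifs <;> simp
  have hdiag : ∀ p : M, ‖C p p‖ = M.card + 1 := by
    intro p
    simp only [C, patternMatrix, Matrix.submatrix_apply, Matrix.of_apply, Prod.mk.eta, p.2,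
      if_true]
    exact abs_of_pos (by positivity)
  have hdom : ∀ p, ∑ q ∈ Finset.univ.erase p, ‖C p q‖ < ‖C p p‖ := by
    intro p
    calc ∑ q ∈ Finset.univ.erase p, ‖C p q‖
        ≤ ∑ q ∈ Finset.univ.erase p, (1 : ℝ) :=
          Finset.sum_le_sum fun q hq => hoff p q (Finset.ne_of_mem_erase hq).symm
      _ ≤ M.card := by simp
      _ < ‖C p p‖ := by rw [hdiag]; linarith
  simpa using Matrix.card_le_rank_of_det_submatrix_ne_zero (det_ne_zero_of_sum_row_lt_diag hdom)

end Pattern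

theorem stmt1_general {m n : ℕ} (S : Finset (Fin m × Fin n)) :
    sprank S = nu S := by
  have hbdd :
      BddAbove {r : ℕ | ∃ A : Matrix (Fin m) (Fin n) ℝ, HasPattern S A ∧ A.rank = r} := by
    refine ⟨n, ?_⟩
    rintro _ ⟨A, -, rfl⟩
    exact A.rank_le_width
  have hne :
      {r : ℕ | ∃ A : Matrix (Fin m) (Fin n) ℝ, HasPattern S A ∧ A.rank = r}.Nonempty :=
    ⟨_, _, hasPattern_patternMatrix (Finset.empty_subset S) one_ne_zero, rfl⟩
  apply le_antisymm
  · refine csSup_le hne ?_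
    rintro _ ⟨A, hA, rfl⟩
    exact rank_le_nu hA
  · refine csSup_le ⟨0, ∅, by simp [IsMatching]⟩ ?_
    rintro _ ⟨M, hMS, hM, rfl⟩
    have hA := hasPattern_patternMatrix (S := S) hMS (t := M.card + 1) (by positivity)
    exact (card_le_rank_patternMatrix hM).trans (le_csSup hbdd ⟨_, hA, rfl⟩)

/-- the generic rank of a sparsity pattern equals the maximum cardinality of a
matching of the pattern. -/
theorem stmt1 {m n : ℕ} (hn : 1 ≤ n) (hmn : n < m) (S : Finset (Fin m × Fin n)) :
    sprank S = nu S :=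
  stmt1_general S
end

section
/- Suppose sprank(A^S) = n and A ∈ A^S satisfies the matching property: rank(A_T) = sprank(A^S_T) for every subset T ⊆ {1,…,m}. Then cospark(A) = spcospark(A^S). -/
/-!
If `x ≠ 0` attains `cospark A` and `T` is the set of rows where `A x` vanishes, then
`rank A_T < n`. By the matching property `A_T` has the largest rank among all matrices with
pattern `S_T`, so every `B ∈ A^S` also has `rank B_T < n`: some `y ≠ 0` has `B y` vanishing on
`T`, whence `‖B y‖₀ ≤ ‖A x‖₀`. Thus `A` attains the maximum defining `spcospark S`.
-/

open Matrix MeasureTheory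

theorem Matrix.rank_lt_card_width_iff {K m n : Type*} [Field K] [Fintype n]
    (A : Matrix m n K) : A.rank < Fintype.card n ↔ ∃ x ≠ 0, A *ᵥ x = 0 := by
  have h := LinearMap.finrank_range_add_finrank_ker A.mulVecLin
  rw [Module.finrank_fintype_fun_eq_card] at h
  rw [Matrix.rank, ← Nat.sub_pos_iff_lt, ← h, Nat.add_sub_cancel_left, Module.finrank_pos_iff,
    Submodule.nontrivial_iff_ne_bot, Ne, LinearMap.ker_eq_bot']
  simp [and_comm]

section

variable {m n : ℕ}

theorem rowRestrict_mulVec_apply (A : Matrix (Fin m) (Fin n) ℝ) (T : Finset (Fin m))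
    (x : Fin n → ℝ) (i : Fin m) :
    (rowRestrict A T *ᵥ x) i = if i ∈ T then (A *ᵥ x) i else 0 := by
  by_cases hi : i ∈ T <;> simp [rowRestrict, mulVec, dotProduct, hi]

theorem rowRestrict_mulVec_eq_zero_iff (A : Matrix (Fin m) (Fin n) ℝ) (T : Finset (Fin m))
    (x : Fin n → ℝ) : rowRestrict A T *ᵥ x = 0 ↔ ∀ i ∈ T, (A *ᵥ x) i = 0 := by
  simp only [funext_iff, rowRestrict_mulVec_apply, Pi.zero_apply, ite_eq_right_iff]

theorem HasPattern.rowRestrict {S : Finset (Fin m × Fin n)} {B : Matrix (Fin m) (Fin n) ℝ}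
    (hB : HasPattern S B) (T : Finset (Fin m)) :
    HasPattern (patternOn S T) (rowRestrict B T) := by
  intro i j
  by_cases hi : i ∈ T <;> simp [_root_.rowRestrict, patternOn, hi, hB i j]

theorem HasPattern.rank_le_sprank {S : Finset (Fin m × Fin n)} {B : Matrix (Fin m) (Fin n) ℝ}
    (hB : HasPattern S B) : B.rank ≤ sprank S := by
  refine le_csSup ⟨n, ?_⟩ ⟨B, hB, rfl⟩
  rintro _ ⟨C, -, rfl⟩
  simpa using C.rank_le_width

theorem l0_le_l0_of_forall_eq_zero {y z : Fin m → ℝ} (h : ∀ i, y i = 0 → z i = 0) :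
    l0 z ≤ l0 y :=
  Finset.card_le_card fun i ↦ by simpa using mt (h i)

theorem cospark_le_cospark_of_rank_rowRestrict_le {A B : Matrix (Fin m) (Fin n) ℝ}
    (h : ∀ T, (rowRestrict B T).rank ≤ (rowRestrict A T).rank) : cospark B ≤ cospark A := by
  by_cases hne : {k | ∃ x : Fin n → ℝ, x ≠ 0 ∧ l0 (A *ᵥ x) = k}.Nonempty
  · obtain ⟨x, hx, hxA⟩ := Nat.sInf_mem hne
    set T := Finset.univ.filter fun i ↦ (A *ᵥ x) i = 0
    have hAT : (rowRestrict A T).rank < n := by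
      simpa using (rowRestrict A T).rank_lt_card_width_iff.2
        ⟨x, hx, (rowRestrict_mulVec_eq_zero_iff A T x).2 (by simp [T])⟩
    obtain ⟨y, hy, hBy⟩ :=
      (rowRestrict B T).rank_lt_card_width_iff.1 (by simpa using (h T).trans_lt hAT)
    have hsupp : ∀ i, (A *ᵥ x) i = 0 → (B *ᵥ y) i = 0 := fun i hi ↦
      (rowRestrict_mulVec_eq_zero_iff B T y).1 hBy i (by simp [T, hi])
    calc cospark B ≤ l0 (B *ᵥ y) := Nat.sInf_le ⟨y, hy, rfl⟩
      _ ≤ l0 (A *ᵥ x) := l0_le_l0_of_forall_eq_zero hsupp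
      _ = cospark A := hxA
  · have hzero : ∀ x : Fin n → ℝ, x = 0 := fun x ↦ by
      by_contra hx
      exact hne ⟨_, x, hx, rfl⟩
    have hB : {k | ∃ x : Fin n → ℝ, x ≠ 0 ∧ l0 (B *ᵥ x) = k} = ∅ :=
      Set.eq_empty_of_forall_notMem fun _ ⟨x, hx, _⟩ ↦ hx (hzero x)
    simp [cospark, hB]

end

theorem stmt2_general {m n : ℕ} (S : Finset (Fin m × Fin n))
    (A : Matrix (Fin m) (Fin n) ℝ) (hA : HasPattern S A)
    (hmatch : ∀ T : Finset (Fin m), (rowRestrict A T).rank = sprank (patternOn S T)) :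
    cospark A = spcospark S := by
  have hmax : IsGreatest {k | ∃ B : Matrix (Fin m) (Fin n) ℝ, HasPattern S B ∧ cospark B = k}
      (cospark A) := by
    refine ⟨⟨A, hA, rfl⟩, ?_⟩
    rintro _ ⟨B, hB, rfl⟩
    exact cospark_le_cospark_of_rank_rowRestrict_le fun T ↦
      hmatch T ▸ (hB.rowRestrict T).rank_le_sprank
  exact hmax.csSup_eq.symm

/-- if `sprank S = n` and `A ∈ A^S` satisfies the matching property
(`rank(A_T) = sprank (A^S_T)` for every set of rows `T`), then `cospark A = spcospark S`. -/
theorem stmt2 {m n : ℕ} (hn : 1 ≤ n) (hmn : n < m) (S : Finset (Fin m × Fin n))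
    (hspr : sprank S = n) (A : Matrix (Fin m) (Fin n) ℝ) (hA : HasPattern S A)
    (hmatch : ∀ T : Finset (Fin m), (rowRestrict A T).rank = sprank (patternOn S T)) :
    cospark A = spcospark S :=
  stmt2_general S A hA hmatch
end

section
/- In the OPT setup, every column adjacent to J is matched by the partial matching M_p: for every row j ∈ J and every column k with (j,k) ∈ S, there exists a row i ∈ I ∩ X_{W*} with (i,k) ∈ M (so (i,k) ∈ M_p). -/
open Matrix MeasureTheory

/-!
`M` has `n - 1 = ν(S_OPT)` edges, so it is a maximum matching of `S_OPT`. An edge `(j, k)` from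
the unmatched row `j` therefore ends in a matched column, say `(i, k) ∈ M`. Swapping `(i, k)` for
`(j, k)` gives another maximum matching, in which `i` is unmatched, so every column adjacent to `i`
is matched by it, hence lies in `W*`: that is, `i ∈ X_{W*}`.
-/

open Finset

variable {m n : ℕ} {S M : Finset (Fin m × Fin n)}

lemma card_le_nu (hMS : M ⊆ S) (hM : IsMatching M) : M.card ≤ nu S :=
  le_csSup ⟨S.card, by rintro _ ⟨N, hNS, -, rfl⟩; exact card_le_card hNS⟩ ⟨M, hMS, hM, rfl⟩

namespace IsMatching

lemma subset {N : Finset (Fin m × Fin n)} (hM : IsMatching M) (hNM : N ⊆ M) : IsMatching N :=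
  fun p hp q hq hpq => hM p (hNM hp) q (hNM hq) hpq

lemma insert_of_forall (hM : IsMatching M) {p : Fin m × Fin n}
    (hp : ∀ q ∈ M, q.1 ≠ p.1 ∧ q.2 ≠ p.2) : IsMatching (insert p M) := by
  intro a ha b hb hab
  rcases mem_insert.mp ha with rfl | haM <;> rcases mem_insert.mp hb with rfl | hbM
  · exact absurd rfl hab
  · exact (hp b hbM).imp Ne.symm Ne.symm
  · exact hp a haM
  · exact hM a haM b hbM hab

lemma fst_ne_and_snd_ne_of_mem_erase (hM : IsMatching M) {i : Fin m} {k : Fin n} (hik : (i, k) ∈ M)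
    {q : Fin m × Fin n} (hq : q ∈ M.erase (i, k)) : q.1 ≠ i ∧ q.2 ≠ k :=
  hM q (mem_of_mem_erase hq) (i, k) hik (ne_of_mem_erase hq)

lemma snd_mem_image_of_card_eq_nu (hMS : M ⊆ S) (hM : IsMatching M) (hcard : M.card = nu S)
    {j : Fin m} {k : Fin n} (hjk : (j, k) ∈ S) (hj : j ∉ M.image Prod.fst) :
    k ∈ M.image Prod.snd := by
  by_contra hk
  have hfresh : (j, k) ∉ M := fun h => hj (mem_image_of_mem Prod.fst h)
  have hbig := card_le_nu (insert_subset hjk hMS) <| hM.insert_of_forall fun q hq =>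
    ⟨fun h => hj (mem_image.mpr ⟨q, hq, h⟩), fun h => hk (mem_image.mpr ⟨q, hq, h⟩)⟩
  rw [card_insert_of_notMem hfresh, hcard] at hbig
  omega

lemma exchange (hM : IsMatching M) {i j : Fin m} {k : Fin n} (hik : (i, k) ∈ M)
    (hj : j ∉ M.image Prod.fst) : IsMatching (insert (j, k) (M.erase (i, k))) :=
  (hM.subset (erase_subset _ _)).insert_of_forall fun q hq =>
    ⟨fun h => hj (mem_image.mpr ⟨q, mem_of_mem_erase hq, h⟩),
      (hM.fst_ne_and_snd_ne_of_mem_erase hik hq).2⟩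

/-- Otherwise `j — k — i — k'` would be an augmenting path. -/
lemma snd_mem_image_of_partner (hMS : M ⊆ S) (hM : IsMatching M) (hcard : M.card = nu S)
    {i j : Fin m} {k k' : Fin n} (hjk : (j, k) ∈ S) (hj : j ∉ M.image Prod.fst)
    (hik : (i, k) ∈ M) (hik' : (i, k') ∈ S) : k' ∈ M.image Prod.snd := by
  have hij : j ≠ i := fun h => hj (h ▸ mem_image_of_mem Prod.fst hik)
  have hjk_erase : (j, k) ∉ M.erase (i, k) :=
    fun h => hj (mem_image_of_mem Prod.fst (mem_of_mem_erase h))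
  have hswap_card : (insert (j, k) (M.erase (i, k))).card = nu S := by
    rw [card_insert_of_notMem hjk_erase, card_erase_add_one hik, hcard]
  have hi_free : i ∉ (insert (j, k) (M.erase (i, k))).image Prod.fst := by
    simp only [mem_image, mem_insert]
    rintro ⟨q, rfl | hq, rfl⟩
    exacts [hij rfl, (hM.fst_ne_and_snd_ne_of_mem_erase hik hq).1 rfl]
  have hk' := snd_mem_image_of_card_eq_nu
    (insert_subset hjk ((erase_subset _ _).trans hMS)) (hM.exchange hik hj) hswap_card hik' hi_free
  obtain ⟨q, hq, rfl⟩ := mem_image.mp hk'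
  rcases mem_insert.mp hq with rfl | hq
  exacts [mem_image.mpr ⟨_, hik, rfl⟩, mem_image_of_mem _ (mem_of_mem_erase hq)]

end IsMatching

theorem stmt9_general {m n : ℕ} (S : Finset (Fin m × Fin n))
    (OPT : Finset (Fin m)) (hOPT : nu (patternOn S OPT) = n - 1)
    (M : Finset (Fin m × Fin n)) (hMsub : M ⊆ patternOn S OPT)
    (hM : IsMatching M) (hMcard : M.card = n - 1)
    (I : Finset (Fin m)) (hI : I = M.image Prod.fst)
    (J : Finset (Fin m)) (hJ : J = OPT \ I)
    (W : Finset (Fin n)) (hW : W = M.image Prod.snd)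
    :
    ∀ j ∈ J, ∀ k : Fin n, (j, k) ∈ S → ∃ i ∈ I ∩ rowsIn S W, (i, k) ∈ M := by
  intro j hj k hjk
  subst hI hJ hW
  obtain ⟨hjOPT, hjI⟩ := mem_sdiff.mp hj
  have hcard : M.card = nu (patternOn S OPT) := hMcard.trans hOPT.symm
  have hjkP : (j, k) ∈ patternOn S OPT := mem_filter.mpr ⟨hjk, hjOPT⟩
  obtain ⟨⟨i, k⟩, hik, rfl⟩ := mem_image.mp (hM.snd_mem_image_of_card_eq_nu hMsub hcard hjkP hjI)
  have hiOPT : i ∈ OPT := (mem_filter.mp (hMsub hik)).2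
  refine ⟨i, mem_inter.mpr ⟨mem_image_of_mem _ hik, mem_filter.mpr ⟨mem_univ _, ?_⟩⟩, hik⟩
  exact fun k' hik' => hM.snd_mem_image_of_partner hMsub hcard hjkP hjI hik
    (mem_filter.mpr ⟨hik', hiOPT⟩)

/-- in the OPT setup, every column adjacent to `J` is matched by the partial
matching `M_p = {(i,k) ∈ M : i ∈ X_{W*}}`: for every `j ∈ J` and every column `k` with
`(j,k) ∈ S`, there is a row `i ∈ I ∩ X_{W*}` with `(i,k) ∈ M`. -/
theorem stmt9 {m n : ℕ} (hn : 1 ≤ n) (hmn : n < m) (S : Finset (Fin m × Fin n))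
    (hspr : sprank S = n)
    (OPT : Finset (Fin m)) (hOPT : nu (patternOn S OPT) = n - 1)
    (hmax : ∀ T : Finset (Fin m), nu (patternOn S T) = n - 1 → T.card ≤ OPT.card)
    (M : Finset (Fin m × Fin n)) (hMsub : M ⊆ patternOn S OPT)
    (hM : IsMatching M) (hMcard : M.card = n - 1)
    (I : Finset (Fin m)) (hI : I = M.image Prod.fst)
    (J : Finset (Fin m)) (hJ : J = OPT \ I) (hJne : J.Nonempty)
    (W : Finset (Fin n)) (hW : W = M.image Prod.snd)
    (v : Fin n) (hv : v ∉ W)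
    :
    ∀ j ∈ J, ∀ k : Fin n, (j, k) ∈ S → ∃ i ∈ I ∩ rowsIn S W, (i, k) ∈ M :=
  stmt9_general S OPT hOPT M hMsub hM hMcard I hI J hJ W hW
end

section
/- In the OPT setup, consider the sparsity pattern S_{X_{W*}} (rows restricted to X_{W*}) with the matching M_p. Then there exists no augmenting path with respect to M_p starting from any row j ∈ J; that is, there is no sequence j = i_0, c_1, i_1, c_2, …, i_{k−1}, c_k of distinct rows i_t ∈ X_{W*} and distinct columns c_t such that (i_{t−1}, c_t) ∈ S for all 1 ≤ t ≤ k, (i_t, c_t) ∈ M_p for all 1 ≤ t ≤ k−1, and the final column c_k is not matched by M_p. -/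
open Matrix MeasureTheory

/-!
The `M_p`-path from `j` ends at a column of `W*`, which `M` matches to a row `i₀ ∉ X_{W*}`
(otherwise that edge would belong to `M_p`). Being outside `X_{W*}`, the row `i₀` has an edge to a
column outside `W*`, i.e. one left unmatched by `M`. Appending these two edges gives an
`M`-augmenting path within the rows of `OPT`, and flipping it yields a matching of `S_OPT` with
`n` edges, contradicting `ν(S_OPT) = n - 1`.
-/

open Finset

variable {m n : ℕ}

namespace IsMatching

variable {M Q : Finset (Fin m × Fin n)}

theorem eq_of_fst_eq (hM : IsMatching M) {p q : Fin m × Fin n} (hp : p ∈ M) (hq : q ∈ M)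
    (h : p.1 = q.1) : p = q := by
  by_contra hne
  exact (hM p hp q hq hne).1 h

theorem eq_of_snd_eq (hM : IsMatching M) {p q : Fin m × Fin n} (hp : p ∈ M) (hq : q ∈ M)
    (h : p.2 = q.2) : p = q := by
  by_contra hne
  exact (hM p hp q hq hne).2 h

theorem insert (hQ : IsMatching Q) {a : Fin m} {b : Fin n} (h : ∀ q ∈ Q, q.1 ≠ a ∧ q.2 ≠ b) :
    IsMatching (insert (a, b) Q) := by
  intro p hp q hq hne
  rcases mem_insert.1 hp with rfl | hp <;> rcases mem_insert.1 hq with rfl | hq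
  · exact absurd rfl hne
  · exact (h q hq).imp Ne.symm Ne.symm
  · exact h p hp
  · exact hQ p hp q hq hne

end IsMatching

theorem isMatching_image {ι : Type*} [Fintype ι] {r : ι → Fin m} {c : ι → Fin n}
    (hr : Function.Injective r) (hc : Function.Injective c) :
    IsMatching (univ.image fun t => (r t, c t)) := by
  intro p hp q hq hne
  obtain ⟨t, -, rfl⟩ := mem_image.1 hp
  obtain ⟨s, -, rfl⟩ := mem_image.1 hq
  have hts : t ≠ s := fun h => hne (h ▸ rfl)
  exact ⟨hr.ne hts, hc.ne hts⟩

theorem card_le_nu_s10 {P M : Finset (Fin m × Fin n)} (hMP : M ⊆ P) (hM : IsMatching M) :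
    M.card ≤ nu P :=
  le_csSup ⟨P.card, by rintro _ ⟨N, hN, -, rfl⟩; exact card_le_card hN⟩ ⟨M, hMP, hM, rfl⟩

/-- When `Q` consists of the non-matching edges of an `M`-augmenting path, this is the symmetric
difference of `M` with the path. -/
def augment (M Q : Finset (Fin m × Fin n)) : Finset (Fin m × Fin n) :=
  M.filter (fun p => p.1 ∉ Q.image Prod.fst) ∪ Q

theorem augment_subset {P M Q : Finset (Fin m × Fin n)} (hM : M ⊆ P) (hQ : Q ⊆ P) :
    augment M Q ⊆ P :=
  union_subset ((filter_subset _ _).trans hM) hQ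

namespace IsMatching

variable {M Q : Finset (Fin m × Fin n)}

theorem augment (hM : IsMatching M) (hQ : IsMatching Q)
    (hcol : ∀ p ∈ M, p.2 ∈ Q.image Prod.snd → p.1 ∈ Q.image Prod.fst) :
    IsMatching (_root_.augment M Q) := by
  have cross : ∀ p ∈ M, p.1 ∉ Q.image Prod.fst → ∀ q ∈ Q, p.1 ≠ q.1 ∧ p.2 ≠ q.2 :=
    fun p hp hpQ q hq => ⟨fun h => hpQ (h ▸ mem_image_of_mem _ hq),
      fun h => hpQ (hcol p hp (h ▸ mem_image_of_mem _ hq))⟩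
  intro p hp q hq hne
  simp only [_root_.augment, mem_union, mem_filter] at hp hq
  rcases hp with ⟨hp, hpQ⟩ | hp <;> rcases hq with ⟨hq, hqQ⟩ | hq
  · exact hM p hp q hq hne
  · exact cross p hp hpQ q hq
  · exact (cross q hq hqQ p hp).imp Ne.symm Ne.symm
  · exact hQ p hp q hq hne

theorem card_lt_card_augment (hM : IsMatching M) {a : Fin m} (ha : a ∈ Q.image Prod.fst)
    (hfree : ∀ p ∈ M, p.1 ≠ a) : M.card < (_root_.augment M Q).card := by
  set R := Q.image Prod.fst
  have hdisj : Disjoint (M.filter (fun p => p.1 ∉ R)) Q :=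
    disjoint_left.2 fun p hp hpQ => (mem_filter.1 hp).2 (mem_image_of_mem _ hpQ)
  have hmatched : (M.filter (fun p => p.1 ∈ R)).card ≤ (R.erase a).card :=
    card_le_card_of_injOn Prod.fst
      (fun p hp => mem_erase.2 ⟨hfree p (mem_filter.1 hp).1, (mem_filter.1 hp).2⟩)
      (fun p hp q hq => hM.eq_of_fst_eq (mem_filter.1 hp).1 (mem_filter.1 hq).1)
  have hsplit := card_filter_add_card_filter_not (s := M) (fun p => p.1 ∈ R)
  have hR := card_erase_of_mem ha
  have hRpos := card_pos.2 ⟨a, ha⟩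
  have hRQ : R.card ≤ Q.card := card_image_le
  rw [_root_.augment, card_union_of_disjoint hdisj]
  omega

end IsMatching

def IsAlternating {k : ℕ} (M : Finset (Fin m × Fin n)) (r : Fin k → Fin m) (c : Fin k → Fin n) :
    Prop :=
  ∀ t : Fin k, ∀ ht : t.val + 1 < k, (r ⟨t.val + 1, ht⟩, c t) ∈ M

namespace IsAlternating

variable {k : ℕ} {M M' : Finset (Fin m × Fin n)} {r : Fin k → Fin m} {c : Fin k → Fin n}

theorem mono (h : IsAlternating M r c) (hMM' : M ⊆ M') : IsAlternating M' r c :=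
  fun t ht => hMM' (h t ht)

theorem mem_of_mem_zero {T : Finset (Fin m)} (h : IsAlternating M r c) (hMT : ∀ p ∈ M, p.1 ∈ T)
    (hk : 0 < k) (h0 : r ⟨0, hk⟩ ∈ T) (t : Fin k) : r t ∈ T := by
  obtain ⟨_ | s, hs⟩ := t
  · exact h0
  · exact hMT _ (h ⟨s, by omega⟩ hs)

theorem fst_mem_of_snd_eq (h : IsAlternating M r c) (hM : IsMatching M) (hk : 0 < k)
    {i₀ : Fin m} (hend : (i₀, c ⟨k - 1, Nat.sub_lt hk Nat.one_pos⟩) ∈ M)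
    {p : Fin m × Fin n} (hp : p ∈ M) {t : Fin k} (ht : p.2 = c t) :
    p.1 = i₀ ∨ ∃ s, r s = p.1 := by
  by_cases hlast : t.val + 1 < k
  · exact Or.inr ⟨_, congrArg Prod.fst (hM.eq_of_snd_eq (h t hlast) hp ht.symm)⟩
  · obtain rfl : t = ⟨k - 1, Nat.sub_lt hk Nat.one_pos⟩ := Fin.ext (show t.val = k - 1 by omega)
    exact Or.inl (congrArg Prod.fst (hM.eq_of_snd_eq hp hend ht))

/-- `r 0, c 0, r 1, …, c (k-1), i₀, u` is an `M`-augmenting path. -/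
theorem exists_isMatching_card_lt (h : IsAlternating M r c) (hM : IsMatching M) (hk : 0 < k)
    (hr : Function.Injective r) (hc : Function.Injective c) (h0 : r ⟨0, hk⟩ ∉ M.image Prod.fst)
    {i₀ : Fin m} {u : Fin n} (hend : (i₀, c ⟨k - 1, Nat.sub_lt hk Nat.one_pos⟩) ∈ M)
    (hri₀ : ∀ t, r t ≠ i₀) (hcu : ∀ t, c t ≠ u) (hu : u ∉ M.image Prod.snd) :
    ∃ M' ⊆ M ∪ insert (i₀, u) (univ.image fun t => (r t, c t)),
      IsMatching M' ∧ M.card < M'.card := by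
  set Q := insert (i₀, u) (univ.image fun t => (r t, c t))
  have hQ : IsMatching Q := (isMatching_image hr hc).insert fun q hq => by
    obtain ⟨t, -, rfl⟩ := mem_image.1 hq
    exact ⟨hri₀ t, hcu t⟩
  have hcol : ∀ p ∈ M, p.2 ∈ Q.image Prod.snd → p.1 ∈ Q.image Prod.fst := by
    intro p hp hpQ
    simp only [Q, image_insert, image_image, mem_insert, mem_image, mem_univ, true_and,
      Function.comp_def] at hpQ ⊢
    rcases hpQ with hpu | ⟨t, ht⟩
    · exact absurd (hpu ▸ mem_image_of_mem Prod.snd hp) hu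
    · exact h.fst_mem_of_snd_eq hM hk hend hp ht.symm
  refine ⟨augment M Q, augment_subset subset_union_left subset_union_right, hM.augment hQ hcol,
    hM.card_lt_card_augment (a := r ⟨0, hk⟩) (by simp [Q]) fun p hp hp0 => ?_⟩
  exact h0 (hp0 ▸ mem_image_of_mem _ hp)

end IsAlternating

/-- A path `j = i₀, c₁, i₁, …, i_{k-1}, c_k` is encoded by `r t = i_t` and `c t = c_{t+1}`
for `t = 0, …, k-1`. -/
theorem stmt10_general {m n : ℕ} (S : Finset (Fin m × Fin n))
    (OPT : Finset (Fin m)) (hOPT : nu (patternOn S OPT) = n - 1)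
    (M : Finset (Fin m × Fin n)) (hMsub : M ⊆ patternOn S OPT)
    (hM : IsMatching M) (hMcard : M.card = n - 1)
    (I : Finset (Fin m)) (hI : I = M.image Prod.fst)
    (J : Finset (Fin m)) (hJ : J = OPT \ I)
    (W : Finset (Fin n)) (hW : W = M.image Prod.snd)
    (Mp : Finset (Fin m × Fin n)) (hMp : Mp = M.filter (fun p => p.1 ∈ rowsIn S W)) :
    ∀ j ∈ J, ¬ ∃ (k : ℕ) (hk : 0 < k) (r : Fin k → Fin m) (c : Fin k → Fin n),
      r ⟨0, hk⟩ = j ∧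
      Function.Injective r ∧ Function.Injective c ∧
      (∀ t, r t ∈ rowsIn S W) ∧
      (∀ t, (r t, c t) ∈ S) ∧
      (∀ t : Fin k, ∀ ht : t.val + 1 < k, (r ⟨t.val + 1, ht⟩, c t) ∈ Mp) ∧
      (∀ i : Fin m, (i, c ⟨k - 1, Nat.sub_lt hk Nat.one_pos⟩) ∉ Mp) := by
  rintro j hj ⟨k, hk, r, c, rfl, hr, hc, hrX, hrcS, hpath, hlast⟩
  subst hI hJ hW hMp
  have hcW : ∀ t, c t ∈ M.image Prod.snd := fun t => (mem_filter.1 (hrX t)).2 _ (hrcS t)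
  obtain ⟨⟨i₀, b⟩, hi₀, rfl⟩ := mem_image.1 (hcW ⟨k - 1, Nat.sub_lt hk Nat.one_pos⟩)
  have hi₀X : i₀ ∉ rowsIn S (M.image Prod.snd) := fun h => hlast i₀ (mem_filter.2 ⟨hi₀, h⟩)
  obtain ⟨u, hu, huW⟩ : ∃ u, (i₀, u) ∈ S ∧ u ∉ M.image Prod.snd := by
    simpa [rowsIn] using hi₀X
  have hpathM : IsAlternating M r c := IsAlternating.mono hpath (filter_subset _ _)
  obtain ⟨M', hM'sub, hM', hlt⟩ := hpathM.exists_isMatching_card_lt hM hk hr hc (mem_sdiff.1 hj).2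
    hi₀ (fun t h => hi₀X (h ▸ hrX t)) (fun t h => huW (by rw [← h]; exact hcW t)) huW
  have hrOPT := hpathM.mem_of_mem_zero (fun p hp => (mem_filter.1 (hMsub hp)).2) hk
    (mem_sdiff.1 hj).1
  have hpathSub : insert (i₀, u) (univ.image fun t => (r t, c t)) ⊆ patternOn S OPT :=
    insert_subset (mem_filter.2 ⟨hu, (mem_filter.1 (hMsub hi₀)).2⟩)
      (image_subset_iff.2 fun t _ => mem_filter.2 ⟨hrcS t, hrOPT t⟩)
  have hle := card_le_nu_s10 (hM'sub.trans (union_subset hMsub hpathSub)) hM'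
  omega

/-- in the OPT setup, with `M_p = {(i,k) ∈ M : i ∈ X_{W*}}`, there is no
augmenting path with respect to `M_p` (within the rows `X_{W*}`) starting from any row
`j ∈ J`.  A path `j = i₀, c₁, i₁, …, i_{k-1}, c_k` is encoded by `r t = i_t` and
`c t = c_{t+1}` for `t = 0, …, k-1`. -/
theorem stmt10 {m n : ℕ} (hn : 1 ≤ n) (hmn : n < m) (S : Finset (Fin m × Fin n))
    (hspr : sprank S = n)
    (OPT : Finset (Fin m)) (hOPT : nu (patternOn S OPT) = n - 1)
    (hmax : ∀ T : Finset (Fin m), nu (patternOn S T) = n - 1 → T.card ≤ OPT.card)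
    (M : Finset (Fin m × Fin n)) (hMsub : M ⊆ patternOn S OPT)
    (hM : IsMatching M) (hMcard : M.card = n - 1)
    (I : Finset (Fin m)) (hI : I = M.image Prod.fst)
    (J : Finset (Fin m)) (hJ : J = OPT \ I) (hJne : J.Nonempty)
    (W : Finset (Fin n)) (hW : W = M.image Prod.snd)
    (v : Fin n) (hv : v ∉ W)
    (Mp : Finset (Fin m × Fin n)) (hMp : Mp = M.filter (fun p => p.1 ∈ rowsIn S W)) :
    ∀ j ∈ J, ¬ ∃ (k : ℕ) (hk : 0 < k) (r : Fin k → Fin m) (c : Fin k → Fin n),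
      r ⟨0, hk⟩ = j ∧
      Function.Injective r ∧ Function.Injective c ∧
      (∀ t, r t ∈ rowsIn S W) ∧
      (∀ t, (r t, c t) ∈ S) ∧
      (∀ t : Fin k, ∀ ht : t.val + 1 < k, (r ⟨t.val + 1, ht⟩, c t) ∈ Mp) ∧
      (∀ i : Fin m, (i, c ⟨k - 1, Nat.sub_lt hk Nat.one_pos⟩) ∉ Mp) :=
  stmt10_general S OPT hOPT M hMsub hM hMcard I hI J hJ W hW Mp hMp
end
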